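/- Fix k ≥ 2 and n ≥ k + 1, and let γ(λ) = ( Σ_{i_1 < ... < i_k} (λ_{i_1} + ... + λ_{i_k})^{-1} )^{-1} on the cone Γ = { λ ∈ ℝ^n : λ_{i_1} + ... + λ_{i_k} > 0 for all i_1 < ... < i_k }. Then: (a) for 1 ≤ m ≤ n, Γ_+^m ⊂ Γ if and only if m ≥ n − k + 1; and (b) for every m with n − k + 1 ≤ m ≤ n, the function γ_m(λ_1,...,λ_m) = γ(0,...,0,λ_1,...,λ_m) on ℝ^m_+ is strictly inverse-concave. -/
import Mathlib

open Finset

noncomputable section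

def posConeP (m : ℕ) : Set (Fin m → ℝ) := {x | ∀ i, 0 < x i}

def StrictInvConcave (m : ℕ) (f : (Fin m → ℝ) → ℝ) : Prop :=
  StrictConcaveOn ℝ (posConeP m) (fun x => - f (fun i => (x i)⁻¹))

def gammaPlusP (n m : ℕ) : Set (Fin n → ℝ) :=
  {x | (∀ i, 0 ≤ x i) ∧ (Finset.univ.filter fun i => 0 < x i).card = m}

def padZeroP (n m : ℕ) (x : Fin m → ℝ) : Fin n → ℝ :=
  fun i => if h : (i : ℕ) < n - m then 0 else x ⟨(i : ℕ) - (n - m), by omega⟩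

def bhGamma (n k : ℕ) : Set (Fin n → ℝ) :=
  {x | ∀ T : Finset (Fin n), T.card = k → 0 < ∑ i ∈ T, x i}

def bhSpeed (n k : ℕ) (x : Fin n → ℝ) : ℝ :=
  (∑ T ∈ Finset.powersetCard k (Finset.univ : Finset (Fin n)), (∑ i ∈ T, x i)⁻¹)⁻¹


-- Lagrange-style Cauchy-Schwarz
lemma lagrangeCS {ι : Type*} (S : Finset ι) (x w : ι → ℝ) (hx : ∀ i ∈ S, 0 < x i) :
    ∑ i ∈ S, ∑ j ∈ S, (w i * x i - w j * x j)^2 / (x i * x j)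
      = 2 * ((∑ i ∈ S, (w i)^2 * x i) * (∑ i ∈ S, (x i)⁻¹) - (∑ i ∈ S, w i)^2) := by
  have hterm : ∀ i ∈ S, ∀ j ∈ S,
      (w i * x i - w j * x j)^2 / (x i * x j)
        = (w i)^2 * x i * (x j)⁻¹ + (w j)^2 * x j * (x i)⁻¹ - 2 * (w i * w j) := by
    intro i hi j hj
    have hxi := (hx i hi).ne'
    have hxj := (hx j hj).ne'
    field_simp
    ring
  have e0 : ∑ i ∈ S, ∑ j ∈ S, (w i * x i - w j * x j)^2 / (x i * x j)
      = ∑ i ∈ S, ∑ j ∈ S, ((w i)^2 * x i * (x j)⁻¹ + (w j)^2 * x j * (x i)⁻¹ - 2 * (w i * w j)) :=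
    Finset.sum_congr rfl fun i hi => Finset.sum_congr rfl fun j hj => hterm i hi j hj
  have e1 : ∑ i ∈ S, ∑ j ∈ S, (w i)^2 * x i * (x j)⁻¹
      = (∑ i ∈ S, (w i)^2 * x i) * (∑ i ∈ S, (x i)⁻¹) := (Finset.sum_mul_sum S S _ _).symm
  have e2 : ∑ i ∈ S, ∑ j ∈ S, (w j)^2 * x j * (x i)⁻¹
      = (∑ i ∈ S, (w i)^2 * x i) * (∑ i ∈ S, (x i)⁻¹) := by
    rw [Finset.sum_comm]
    exact e1
  have e3 : ∑ i ∈ S, ∑ j ∈ S, w i * w j = (∑ i ∈ S, w i)^2 := by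
    rw [sq, Finset.sum_mul_sum]
  rw [e0]
  simp only [Finset.sum_add_distrib, Finset.sum_sub_distrib, ← Finset.mul_sum]
  rw [← Finset.sum_mul, e2, ← Finset.sum_mul, ← sq]
  ring

lemma csLe {ι : Type*} (S : Finset ι) (x w : ι → ℝ) (hx : ∀ i ∈ S, 0 < x i) :
    (∑ i ∈ S, w i)^2 ≤ (∑ i ∈ S, (w i)^2 * x i) * (∑ i ∈ S, (x i)⁻¹) := by
  have L := lagrangeCS S x w hx
  have h0 : 0 ≤ ∑ i ∈ S, ∑ j ∈ S, (w i * x i - w j * x j)^2 / (x i * x j) := by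
    refine Finset.sum_nonneg fun i hi => Finset.sum_nonneg fun j hj => ?_
    exact div_nonneg (sq_nonneg _) (mul_pos (hx i hi) (hx j hj)).le
  linarith

lemma csLt {ι : Type*} (S : Finset ι) (x w : ι → ℝ) (hx : ∀ i ∈ S, 0 < x i)
    (h : ∃ i ∈ S, ∃ j ∈ S, w i * x i ≠ w j * x j) :
    (∑ i ∈ S, w i)^2 < (∑ i ∈ S, (w i)^2 * x i) * (∑ i ∈ S, (x i)⁻¹) := by
  have L := lagrangeCS S x w hx
  obtain ⟨i, hi, j, hj, hne⟩ := h
  have h0 : 0 < ∑ i ∈ S, ∑ j ∈ S, (w i * x i - w j * x j)^2 / (x i * x j) := by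
    refine Finset.sum_pos' (fun a ha => Finset.sum_nonneg fun b hb =>
      div_nonneg (sq_nonneg _) (mul_pos (hx a ha) (hx b hb)).le) ⟨i, hi, ?_⟩
    refine Finset.sum_pos' (fun b hb =>
      div_nonneg (sq_nonneg _) (mul_pos (hx i hi) (hx b hb)).le) ⟨j, hj, ?_⟩
    refine div_pos ?_ (mul_pos (hx i hi) (hx j hj))
    have : w i * x i - w j * x j ≠ 0 := sub_ne_zero.2 hne
    positivity
  linarith

-- harmonic mean concavity
lemma hmLe {ι : Type*} (S : Finset ι) (hS : S.Nonempty) (x y z : ι → ℝ)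
    (hx : ∀ i, 0 < x i) (hy : ∀ i, 0 < y i) (a b : ℝ) (ha : 0 < a) (hb : 0 < b)
    (hab : a + b = 1) (hz : ∀ i, z i = a * x i + b * y i) :
    a * (∑ i ∈ S, (x i)⁻¹)⁻¹ + b * (∑ i ∈ S, (y i)⁻¹)⁻¹ ≤ (∑ i ∈ S, (z i)⁻¹)⁻¹ := by
  have hzp : ∀ i, 0 < z i := fun i => by rw [hz i]; exact add_pos (mul_pos ha (hx i)) (mul_pos hb (hy i))
  set A := ∑ i ∈ S, (x i)⁻¹ with hA
  set B := ∑ i ∈ S, (y i)⁻¹ with hB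
  set C := ∑ i ∈ S, (z i)⁻¹ with hC
  have hApos : 0 < A := Finset.sum_pos (fun i _ => inv_pos.2 (hx i)) hS
  have hBpos : 0 < B := Finset.sum_pos (fun i _ => inv_pos.2 (hy i)) hS
  have hCpos : 0 < C := Finset.sum_pos (fun i _ => inv_pos.2 (hzp i)) hS
  set w : ι → ℝ := fun i => (C * z i)⁻¹ with hw
  have hw1 : ∑ i ∈ S, w i = 1 := by
    simp only [hw, mul_inv]
    rw [← Finset.mul_sum, ← hC, inv_mul_cancel₀ hCpos.ne']
  have hw2 : ∑ i ∈ S, (w i)^2 * z i = C⁻¹ := by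
    have : ∀ i ∈ S, (w i)^2 * z i = C⁻¹ * C⁻¹ * (z i)⁻¹ := by
      intro i _
      have := (hzp i).ne'
      simp only [hw]
      field_simp
    rw [Finset.sum_congr rfl this, ← Finset.mul_sum, ← hC]
    field_simp
  have hsplit : ∑ i ∈ S, (w i)^2 * z i
      = a * ∑ i ∈ S, (w i)^2 * x i + b * ∑ i ∈ S, (w i)^2 * y i := by
    rw [Finset.mul_sum, Finset.mul_sum, ← Finset.sum_add_distrib]
    exact Finset.sum_congr rfl fun i _ => by rw [hz i]; ring
  have hcsx : A⁻¹ ≤ ∑ i ∈ S, (w i)^2 * x i := by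
    have h1 := csLe S x w (fun i _ => hx i)
    rw [hw1, one_pow, ← hA] at h1
    rw [inv_eq_one_div, div_le_iff₀ hApos]
    linarith
  have hcsy : B⁻¹ ≤ ∑ i ∈ S, (w i)^2 * y i := by
    have h1 := csLe S y w (fun i _ => hy i)
    rw [hw1, one_pow, ← hB] at h1
    rw [inv_eq_one_div, div_le_iff₀ hBpos]
    linarith
  calc a * A⁻¹ + b * B⁻¹ ≤ a * ∑ i ∈ S, (w i)^2 * x i + b * ∑ i ∈ S, (w i)^2 * y i := by
        have := mul_le_mul_of_nonneg_left hcsx ha.le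
        have := mul_le_mul_of_nonneg_left hcsy hb.le
        linarith
    _ = C⁻¹ := by rw [← hsplit, hw2]

lemma hmLt {ι : Type*} (S : Finset ι) (hS : S.Nonempty) (x y z : ι → ℝ)
    (hx : ∀ i, 0 < x i) (hy : ∀ i, 0 < y i) (a b : ℝ) (ha : 0 < a) (hb : 0 < b)
    (hab : a + b = 1) (hz : ∀ i, z i = a * x i + b * y i)
    (hstr : ∃ i ∈ S, ∃ j ∈ S, x i * y j ≠ x j * y i) :
    a * (∑ i ∈ S, (x i)⁻¹)⁻¹ + b * (∑ i ∈ S, (y i)⁻¹)⁻¹ < (∑ i ∈ S, (z i)⁻¹)⁻¹ := by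
  have hzp : ∀ i, 0 < z i := fun i => by rw [hz i]; exact add_pos (mul_pos ha (hx i)) (mul_pos hb (hy i))
  set A := ∑ i ∈ S, (x i)⁻¹ with hA
  set B := ∑ i ∈ S, (y i)⁻¹ with hB
  set C := ∑ i ∈ S, (z i)⁻¹ with hC
  have hApos : 0 < A := Finset.sum_pos (fun i _ => inv_pos.2 (hx i)) hS
  have hBpos : 0 < B := Finset.sum_pos (fun i _ => inv_pos.2 (hy i)) hS
  have hCpos : 0 < C := Finset.sum_pos (fun i _ => inv_pos.2 (hzp i)) hS
  set w : ι → ℝ := fun i => (C * z i)⁻¹ with hw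
  have hw1 : ∑ i ∈ S, w i = 1 := by
    simp only [hw, mul_inv]
    rw [← Finset.mul_sum, ← hC, inv_mul_cancel₀ hCpos.ne']
  have hw2 : ∑ i ∈ S, (w i)^2 * z i = C⁻¹ := by
    have : ∀ i ∈ S, (w i)^2 * z i = C⁻¹ * C⁻¹ * (z i)⁻¹ := by
      intro i _
      have := (hzp i).ne'
      simp only [hw]
      field_simp
    rw [Finset.sum_congr rfl this, ← Finset.mul_sum, ← hC]
    field_simp
  have hsplit : ∑ i ∈ S, (w i)^2 * z i
      = a * ∑ i ∈ S, (w i)^2 * x i + b * ∑ i ∈ S, (w i)^2 * y i := by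
    rw [Finset.mul_sum, Finset.mul_sum, ← Finset.sum_add_distrib]
    exact Finset.sum_congr rfl fun i _ => by rw [hz i]; ring
  -- strict CS for x
  obtain ⟨i, hi, j, hj, hne⟩ := hstr
  have hwx : w i * x i ≠ w j * x j := by
    intro heq
    apply hne
    simp only [hw] at heq
    have hzi := (hzp i).ne'
    have hzj := (hzp j).ne'
    have h1 : x i * z j = x j * z i := by
      field_simp at heq
      nlinarith [heq, hCpos]
    rw [hz i, hz j] at h1
    have h2 : b * (x i * y j) = b * (x j * y i) := by linear_combination h1
    exact mul_left_cancel₀ hb.ne' h2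
  have hcsx : A⁻¹ < ∑ i ∈ S, (w i)^2 * x i := by
    have h1 := csLt S x w (fun i _ => hx i) ⟨i, hi, j, hj, hwx⟩
    rw [hw1, one_pow, ← hA] at h1
    rw [inv_eq_one_div, div_lt_iff₀ hApos]
    linarith
  have hcsy : B⁻¹ ≤ ∑ i ∈ S, (w i)^2 * y i := by
    have h1 := csLe S y w (fun i _ => hy i)
    rw [hw1, one_pow, ← hB] at h1
    rw [inv_eq_one_div, div_le_iff₀ hBpos]
    linarith
  calc a * A⁻¹ + b * B⁻¹ < a * ∑ i ∈ S, (w i)^2 * x i + b * ∑ i ∈ S, (w i)^2 * y i := by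
        have h1 := mul_lt_mul_of_pos_left hcsx ha
        have h2 := mul_le_mul_of_nonneg_left hcsy hb.le
        linarith
    _ = C⁻¹ := by rw [← hsplit, hw2]

def emP (n m : ℕ) (hmn : m ≤ n) (j : Fin m) : Fin n :=
  ⟨n - m + (j : ℕ), by have := j.isLt; omega⟩

def STP (n m : ℕ) (hmn : m ≤ n) (T : Finset (Fin n)) : Finset (Fin m) :=
  Finset.univ.filter fun j => emP n m hmn j ∈ T

lemma pad_sum (n m : ℕ) (hm : 0 < m) (hmn : m ≤ n) (v : Fin m → ℝ) (T : Finset (Fin n)) :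
    ∑ i ∈ T, padZeroP n m v i = ∑ j ∈ STP n m hmn T, v j := by
  rw [← Finset.sum_filter_add_sum_filter_not T (fun i : Fin n => (i : ℕ) < n - m)]
  have h1 : ∑ i ∈ T.filter (fun i : Fin n => (i : ℕ) < n - m), padZeroP n m v i = 0 := by
    refine Finset.sum_eq_zero fun i hi => ?_
    have := (Finset.mem_filter.1 hi).2
    simp [padZeroP, this]
  rw [h1, zero_add]
  refine Finset.sum_nbij' (fun i => (⟨(i : ℕ) - (n - m), by have := i.isLt; omega⟩ : Fin m))
    (fun j => emP n m hmn j) ?_ ?_ ?_ ?_ ?_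
  · intro i hi
    obtain ⟨hiT, hige⟩ := Finset.mem_filter.1 hi
    simp only [STP, Finset.mem_filter, Finset.mem_univ, true_and]
    have : emP n m hmn ⟨(i : ℕ) - (n - m), by have := i.isLt; omega⟩ = i := by
      apply Fin.ext; simp [emP]; omega
    rwa [this]
  · intro j hj
    simp only [STP, Finset.mem_filter, Finset.mem_univ, true_and] at hj
    refine Finset.mem_filter.2 ⟨hj, ?_⟩
    simp [emP]
  · intro i hi
    obtain ⟨hiT, hige⟩ := Finset.mem_filter.1 hi
    apply Fin.ext; simp [emP]; omega
  · intro j hj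
    apply Fin.ext; simp [emP]
  · intro i hi
    obtain ⟨hiT, hige⟩ := Finset.mem_filter.1 hi
    simp [padZeroP, hige]

lemma card_filter_lt (n t : ℕ) (h : t ≤ n) :
    ((Finset.univ : Finset (Fin n)).filter fun i : Fin n => (i : ℕ) < t).card = t := by
  have : ((Finset.univ : Finset (Fin n)).filter fun i : Fin n => (i : ℕ) < t)
      = (Finset.univ : Finset (Fin t)).map (Fin.castLEEmb h) := by
    ext i
    simp only [Finset.mem_filter, Finset.mem_univ, true_and, Finset.mem_map]
    constructor
    · intro hi
      exact ⟨⟨(i : ℕ), hi⟩, Fin.ext (by simp)⟩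
    · rintro ⟨j, rfl⟩
      simpa using j.isLt
  rw [this, Finset.card_map, Finset.card_univ, Fintype.card_fin]

lemma STP_nonempty (n m k : ℕ) (hmn : m ≤ n) (hnm : n - m < k) (T : Finset (Fin n))
    (hT : T.card = k) : (STP n m hmn T).Nonempty := by
  rw [Finset.nonempty_iff_ne_empty]
  intro hemp
  have hsub : T ⊆ (Finset.univ : Finset (Fin n)).filter fun i : Fin n => (i : ℕ) < n - m := by
    intro i hiT
    refine Finset.mem_filter.2 ⟨Finset.mem_univ _, ?_⟩
    by_contra hge
    push_neg at hge
    have hj : emP n m hmn ⟨(i : ℕ) - (n - m), by have := i.isLt; omega⟩ ∈ T := by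
      have : emP n m hmn ⟨(i : ℕ) - (n - m), by have := i.isLt; omega⟩ = i := by
        apply Fin.ext; simp [emP]; omega
      rwa [this]
    have : (⟨(i : ℕ) - (n - m), by have := i.isLt; omega⟩ : Fin m) ∈ STP n m hmn T :=
      Finset.mem_filter.2 ⟨Finset.mem_univ _, hj⟩
    rw [hemp] at this
    exact absurd this (Finset.notMem_empty _)
  have := Finset.card_le_card hsub
  rw [hT, card_filter_lt n (n - m) (by omega)] at this
  omega

lemma invConvexLe {A B a b : ℝ} (hA : 0 < A) (hB : 0 < B) (ha : 0 < a) (hb : 0 < b)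
    (hab : a + b = 1) : (a * A + b * B)⁻¹ ≤ a * A⁻¹ + b * B⁻¹ := by
  have hD : 0 < a * A + b * B := by positivity
  have key : a * A⁻¹ + b * B⁻¹ - (a * A + b * B)⁻¹
      = a * b * (A - B)^2 / (A * B * (a * A + b * B)) := by
    have hb' : b = 1 - a := by linarith
    subst hb'
    field_simp
    ring
  have : 0 ≤ a * b * (A - B)^2 / (A * B * (a * A + b * B)) := by positivity
  linarith

lemma invConvexLt {A B a b : ℝ} (hA : 0 < A) (hB : 0 < B) (hAB : A ≠ B) (ha : 0 < a)
    (hb : 0 < b) (hab : a + b = 1) : (a * A + b * B)⁻¹ < a * A⁻¹ + b * B⁻¹ := by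
  have hD : 0 < a * A + b * B := by positivity
  have key : a * A⁻¹ + b * B⁻¹ - (a * A + b * B)⁻¹
      = a * b * (A - B)^2 / (A * B * (a * A + b * B)) := by
    have hb' : b = 1 - a := by linarith
    subst hb'
    field_simp
    ring
  have hsq : 0 < (A - B)^2 := by
    have : A - B ≠ 0 := sub_ne_zero.2 hAB
    positivity
  have : 0 < a * b * (A - B)^2 / (A * B * (a * A + b * B)) := by positivity
  linarith

/-- for `k ≥ 2` and `n ≥ k + 1`: (a) for `1 ≤ m ≤ n`, `Γ_+^m ⊆ Γ` iff
`m ≥ n - k + 1`; and (b) for `n - k + 1 ≤ m ≤ n` the function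
`γ_m(λ₁,…,λ_m) = γ(0,…,0,λ₁,…,λ_m)` is strictly inverse-concave on `ℝ^m_+`. -/
theorem stmt15 (n k : ℕ) (hk : 2 ≤ k) (hn : k + 1 ≤ n) :
    (∀ m, 1 ≤ m → m ≤ n → (gammaPlusP n m ⊆ bhGamma n k ↔ n - k + 1 ≤ m)) ∧
    (∀ m, n - k + 1 ≤ m → m ≤ n →
      StrictInvConcave m (fun x => bhSpeed n k (padZeroP n m x))) := by
  constructor
  · -- part (a)
    intro m hm1 hm2
    constructor
    · intro hsub
      by_contra hlt
      push_neg at hlt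
      have hmle : m ≤ n - k := by omega
      set x : Fin n → ℝ := fun i => if (i : ℕ) < n - m then 0 else 1 with hxdef
      have hxg : x ∈ gammaPlusP n m := by
        constructor
        · intro i
          simp only [hxdef]
          split <;> norm_num
        · have hset : (Finset.univ.filter fun i => 0 < x i)
              = Finset.univ.filter fun i : Fin n => ¬ (i : ℕ) < n - m := by
            apply Finset.filter_congr
            intro i _
            simp only [hxdef]
            split <;> simp_all
          rw [hset, Finset.filter_not, Finset.card_sdiff_of_subset (Finset.filter_subset _ _),
            card_filter_lt n (n - m) (by omega), Finset.card_univ, Fintype.card_fin]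
          omega
      have hxib := hsub hxg
      have hTcard : ((Finset.univ : Finset (Fin n)).filter fun i : Fin n => (i : ℕ) < k).card = k :=
        card_filter_lt n k (by omega)
      have hpos := hxib _ hTcard
      have hzero : ∑ i ∈ (Finset.univ : Finset (Fin n)).filter (fun i : Fin n => (i : ℕ) < k),
          x i = 0 := by
        refine Finset.sum_eq_zero fun i hi => ?_
        have hik := (Finset.mem_filter.1 hi).2
        simp only [hxdef]
        rw [if_pos (by omega)]
      rw [hzero] at hpos
      exact lt_irrefl _ hpos
    · intro hge y hy
      intro T hT
      obtain ⟨hy0, hycard⟩ := hy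
      have hex : ∃ i ∈ T, 0 < y i := by
        by_contra h
        push_neg at h
        have hsub2 : T ⊆ Finset.univ \ (Finset.univ.filter fun i => 0 < y i) := by
          intro i hiT
          rw [Finset.mem_sdiff]
          exact ⟨Finset.mem_univ _, fun hmem => absurd ((Finset.mem_filter.1 hmem).2)
            (not_lt.2 (h i hiT))⟩
        have := Finset.card_le_card hsub2
        rw [Finset.card_sdiff_of_subset (Finset.filter_subset _ _), hycard, Finset.card_univ,
          Fintype.card_fin, hT] at this
        omega
      obtain ⟨i, hiT, hyi⟩ := hex
      exact Finset.sum_pos' (fun j _ => hy0 j) ⟨i, hiT, hyi⟩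
  · -- part (b)
    intro m hm1 hm2
    have hm0 : 0 < m := by omega
    have hmn : m ≤ n := hm2
    have hnmk : n - m < k := by omega
    have hGdef : ∀ u : Fin m → ℝ, bhSpeed n k (padZeroP n m fun i => (u i)⁻¹)
        = (∑ T ∈ Finset.powersetCard k (Finset.univ : Finset (Fin n)),
            (∑ j ∈ STP n m hmn T, (u j)⁻¹)⁻¹)⁻¹ := by
      intro u
      unfold bhSpeed
      congr 1
      exact Finset.sum_congr rfl fun T _ => by rw [pad_sum n m hm0 hmn]
    set G : (Fin m → ℝ) → ℝ := fun u => ∑ T ∈ Finset.powersetCard k (Finset.univ : Finset (Fin n)),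
        (∑ j ∈ STP n m hmn T, (u j)⁻¹)⁻¹ with hG
    have hGpos : ∀ u : Fin m → ℝ, (∀ i, 0 < u i) → 0 < G u := by
      intro u hu
      refine Finset.sum_pos (fun T hT => ?_) ?_
      · have hTc := (Finset.mem_powersetCard.1 hT).2
        have hne := STP_nonempty n m k hmn hnmk T hTc
        exact inv_pos.2 (Finset.sum_pos (fun j _ => inv_pos.2 (hu j)) hne)
      · refine Finset.powersetCard_nonempty.2 ?_
        rw [Finset.card_univ, Fintype.card_fin]
        omega
    constructor
    · have : posConeP m = Set.pi Set.univ (fun _ : Fin m => Set.Ioi (0 : ℝ)) := by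
        ext u
        simp [posConeP, Set.mem_pi]
      rw [this]
      exact convex_pi fun i _ => convex_Ioi 0
    · intro x hx y hy hxy a b ha hb hab
      have hx' : ∀ i, 0 < x i := hx
      have hy' : ∀ i, 0 < y i := hy
      set z : Fin m → ℝ := fun i => a * x i + b * y i with hzdef
      have hz' : ∀ i, 0 < z i := fun i => add_pos (mul_pos ha (hx' i)) (mul_pos hb (hy' i))
      have hgoal : a • x + b • y = z := by
        funext i
        simp [hzdef]
      simp only [smul_eq_mul, hgoal]
      rw [hGdef x, hGdef y, hGdef z]
      show a * -(G x)⁻¹ + b * -(G y)⁻¹ < -(G z)⁻¹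
      have hcon : a * G x + b * G y ≤ G z := by
        simp only [hG]
        rw [Finset.mul_sum, Finset.mul_sum, ← Finset.sum_add_distrib]
        refine Finset.sum_le_sum fun T hT => ?_
        exact hmLe _ (STP_nonempty n m k hmn hnmk T (Finset.mem_powersetCard.1 hT).2)
          x y z hx' hy' a b ha hb hab (fun i => rfl)
      have hGx := hGpos x hx'
      have hGy := hGpos y hy'
      have hfin : (G z)⁻¹ < a * (G x)⁻¹ + b * (G y)⁻¹ := by
        by_cases hprop : ∃ i, ∃ j, x i * y j ≠ x j * y i
        · obtain ⟨i, j, hne⟩ := hprop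
          have hecard : ({emP n m hmn i, emP n m hmn j} : Finset (Fin n)).card ≤ k :=
            le_trans (Finset.card_insert_le _ _) (by simp; omega)
          obtain ⟨T0, hsubT0, -, hT0card⟩ := Finset.exists_subsuperset_card_eq
            (Finset.subset_univ ({emP n m hmn i, emP n m hmn j} : Finset (Fin n))) hecard
            (by rw [Finset.card_univ, Fintype.card_fin]; omega)
          have hT0mem : T0 ∈ Finset.powersetCard k (Finset.univ : Finset (Fin n)) :=
            Finset.mem_powersetCard.2 ⟨Finset.subset_univ _, hT0card⟩
          have hiS : i ∈ STP n m hmn T0 :=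
            Finset.mem_filter.2 ⟨Finset.mem_univ _, hsubT0 (Finset.mem_insert_self _ _)⟩
          have hjS : j ∈ STP n m hmn T0 :=
            Finset.mem_filter.2 ⟨Finset.mem_univ _,
              hsubT0 (Finset.mem_insert_of_mem (Finset.mem_singleton_self _))⟩
          have hstrict : a * G x + b * G y < G z := by
            simp only [hG]
            rw [Finset.mul_sum, Finset.mul_sum, ← Finset.sum_add_distrib]
            refine Finset.sum_lt_sum (fun T hT => hmLe _
              (STP_nonempty n m k hmn hnmk T (Finset.mem_powersetCard.1 hT).2)
              x y z hx' hy' a b ha hb hab (fun i => rfl)) ⟨T0, hT0mem, ?_⟩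
            exact hmLt _ (STP_nonempty n m k hmn hnmk T0 hT0card)
              x y z hx' hy' a b ha hb hab (fun i => rfl) ⟨i, hiS, j, hjS, hne⟩
          have h1 : (G z)⁻¹ < (a * G x + b * G y)⁻¹ :=
            inv_strictAnti₀ (by positivity) hstrict
          have h2 := invConvexLe hGx hGy ha hb hab
          linarith
        · push_neg at hprop
          set i0 : Fin m := ⟨0, hm0⟩
          set c : ℝ := x i0 / y i0 with hcdef
          have hcpos : 0 < c := div_pos (hx' i0) (hy' i0)
          have hxcy : ∀ j, x j = c * y j := by
            intro j
            rw [hcdef, div_mul_eq_mul_div, eq_div_iff (hy' i0).ne']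
            linear_combination (hprop j i0)
          have hc1 : c ≠ 1 := by
            intro h
            exact hxy (funext fun j => by rw [hxcy j, h, one_mul])
          have hGxy : G x = c * G y := by
            simp only [hG]
            rw [Finset.mul_sum]
            refine Finset.sum_congr rfl fun T _ => ?_
            have : ∑ j ∈ STP n m hmn T, (x j)⁻¹ = c⁻¹ * ∑ j ∈ STP n m hmn T, (y j)⁻¹ := by
              rw [Finset.mul_sum]
              exact Finset.sum_congr rfl fun j _ => by rw [hxcy j, mul_inv]
            rw [this, mul_inv, inv_inv]
          have hGne : G x ≠ G y := by
            rw [hGxy]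
            intro h
            exact hc1 (mul_right_cancel₀ hGy.ne' (by rw [h, one_mul]))
          have h1 : (G z)⁻¹ ≤ (a * G x + b * G y)⁻¹ :=
            inv_anti₀ (by positivity) hcon
          have h2 := invConvexLt hGx hGy hGne ha hb hab
          linarith
      simp only [mul_neg]
      linarith
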